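/- arXiv:2506.10677 — 2 statements merged into one kernel-verified Lean document; each statement's English description precedes it below -/
import Mathlib

section
/- Let π_A, π_B be probability mass functions on a finite set 𝒜 with supp(π_A) = supp(π_B), and r : 𝒜 → ℝ. If f(0) = -1 but f(0) is replaced by an arbitrary value c ≠ -1, the bias of the f-estimator equals Σ_{a: π_A(a)=0} π_B(a)·(c + 1)·r(a); in particular when π_A and π_B have common support, the f-estimator is unbiased for every bounded f. -/
open Finset

/-!
Action by action, `π_A · (π_B / π_A) · (1 + f) = π_B · (1 + f)` wherever `π_A > 0`, so the
importance-weighted correction cancels the `f`-term and turns `π_A` into `π_A - π_B`, which is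
exactly the true improvement. Only actions with `π_A = 0` escape the cancellation: there the
estimator sees the placeholder `c` while the true improvement contributes `+π_B`.
-/

lemma ite_pos_mul_eq {M : Type*} [MulZeroClass M] [PartialOrder M] [DecidableLT M]
    {p : M} (hp : 0 ≤ p) (x : M) :
    (if 0 < p then p * x else 0) = p * x := by
  rcases hp.lt_or_eq with hp | rfl
  · rw [if_pos hp]
  · simp

lemma estimator_term_sub_eq {K : Type*} [Field K] [LinearOrder K] [IsStrictOrderedRing K]
    {pA pB : K} (hA : 0 ≤ pA) (hB : 0 ≤ pB) (y c r : K) :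
    (if 0 < pB then pB * (if 0 < pA then y else c) * r else 0)
      + (if 0 < pA then pA * (1 - pB / pA * (1 + y)) * r else 0)
      - (pA * r - pB * r)
      = if pA = 0 then pB * (c + 1) * r else 0 := by
  simp only [mul_assoc, ite_pos_mul_eq hB]
  rcases hA.lt_or_eq with hpA | rfl
  · simp only [hpA, hpA.ne', if_true, if_false]
    field_simp
    ring
  · simp only [lt_irrefl, if_false, if_true]
    ring

lemma eq_zero_of_eq_zero_of_pos_iff {α : Type*} [Zero α] [LinearOrder α] {pA pB : α}
    (hB : 0 ≤ pB) (hsupp : 0 < pA ↔ 0 < pB) (hpA : pA = 0) : pB = 0 :=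
  le_antisymm (not_lt.mp fun h => (hsupp.mpr h).ne' hpA) hB

theorem stmt_5_general {𝒜 : Type*} [Fintype 𝒜] (πA πB : 𝒜 → ℝ) (r : 𝒜 → ℝ) (f : ℝ → ℝ)
    (c : ℝ)
    (hA : ∀ a, 0 ≤ πA a) (hB : ∀ a, 0 ≤ πB a) :
    ((∑ a ∈ Finset.univ.filter (fun a => 0 < πB a),
        πB a * (if 0 < πA a then f (πA a / πB a) else c) * r a)
      + (∑ a ∈ Finset.univ.filter (fun a => 0 < πA a),
          πA a * (1 - (πB a / πA a) * (1 + f (πA a / πB a))) * r a)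
      - (∑ a, πA a * r a - ∑ a, πB a * r a)
      = ∑ a ∈ Finset.univ.filter (fun a => πA a = 0), πB a * (c + 1) * r a)
    ∧ ((∀ a, 0 < πA a ↔ 0 < πB a) →
        (∑ a ∈ Finset.univ.filter (fun a => 0 < πB a),
            πB a * (if 0 < πA a then f (πA a / πB a) else c) * r a)
          + (∑ a ∈ Finset.univ.filter (fun a => 0 < πA a),
              πA a * (1 - (πB a / πA a) * (1 + f (πA a / πB a))) * r a)
          = ∑ a, πA a * r a - ∑ a, πB a * r a) := by
  have bias : (∑ a ∈ univ.filter (fun a => 0 < πB a),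
        πB a * (if 0 < πA a then f (πA a / πB a) else c) * r a)
      + (∑ a ∈ univ.filter (fun a => 0 < πA a),
          πA a * (1 - (πB a / πA a) * (1 + f (πA a / πB a))) * r a)
      - (∑ a, πA a * r a - ∑ a, πB a * r a)
      = ∑ a ∈ univ.filter (fun a => πA a = 0), πB a * (c + 1) * r a := by
    rw [sum_filter, sum_filter, sum_filter, ← sum_sub_distrib, ← sum_add_distrib,
      ← sum_sub_distrib]
    exact sum_congr rfl fun a _ => estimator_term_sub_eq (hA a) (hB a) _ c (r a)
  refine ⟨bias, fun hsupp => ?_⟩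
  have no_bias : ∑ a ∈ univ.filter (fun a => πA a = 0), πB a * (c + 1) * r a = 0 :=
    sum_eq_zero fun a ha => by
      rw [eq_zero_of_eq_zero_of_pos_iff (hB a) (hsupp a) (mem_filter.mp ha).2]
      ring
  linarith

/-- Bias of the single-step `f`-estimator when the value of `f` at weight `0` is
replaced by an arbitrary constant `c`: the bias relative to the true improvement
`V(π_A) - V(π_B)` equals `Σ_{a : π_A(a)=0} π_B(a)·(c+1)·r(a)`; in particular, when
`π_A` and `π_B` have common support the `f`-estimator is unbiased for every `f`. -/
theorem stmt_5 {𝒜 : Type*} [Fintype 𝒜] (πA πB : 𝒜 → ℝ) (r : 𝒜 → ℝ) (f : ℝ → ℝ)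
    (c : ℝ)
    (hA : ∀ a, 0 ≤ πA a) (hB : ∀ a, 0 ≤ πB a)
    (hAs : ∑ a, πA a = 1) (hBs : ∑ a, πB a = 1) :
    ((∑ a ∈ Finset.univ.filter (fun a => 0 < πB a),
        πB a * (if 0 < πA a then f (πA a / πB a) else c) * r a)
      + (∑ a ∈ Finset.univ.filter (fun a => 0 < πA a),
          πA a * (1 - (πB a / πA a) * (1 + f (πA a / πB a))) * r a)
      - (∑ a, πA a * r a - ∑ a, πB a * r a)
      = ∑ a ∈ Finset.univ.filter (fun a => πA a = 0), πB a * (c + 1) * r a)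
    ∧ ((∀ a, 0 < πA a ↔ 0 < πB a) →
        (∑ a ∈ Finset.univ.filter (fun a => 0 < πB a),
            πB a * (if 0 < πA a then f (πA a / πB a) else c) * r a)
          + (∑ a ∈ Finset.univ.filter (fun a => 0 < πA a),
              πA a * (1 - (πB a / πA a) * (1 + f (πA a / πB a))) * r a)
          = ∑ a, πA a * r a - ∑ a, πB a * r a) :=
  stmt_5_general πA πB r f c hA hB
end

section
/- When n_r = 1 and Δ depends on w such that Δ(1) = 0 (e.g. Δ(w) = |w-1| or Δ(w) = min(|log w|, 1)), the misspecification-aware transform f*_{λ,Δ}(w) = ((1-λTn_AΔ(w)²)w - 1)/((1 + λTn_AΔ(w)²)w + 1) satisfies f*_{λ,Δ}(1) = 0 and -1 ≤ f*_{λ,Δ}(w) ≤ min(2w-1, 1) for all w ≥ 0 and all λ, T, n_A ≥ 0. -/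
/-- With `n_r = 1` and a noise model `Δ` vanishing at `1` (e.g. `Δ(w)=|w-1|` or
`Δ(w)=min(|log w|,1)`), the misspecification-aware transform
`f*_{λ,Δ}(w) = ((1-λTn_AΔ(w)²)w - 1)/((1+λTn_AΔ(w)²)w + 1)` satisfies
`f*_{λ,Δ}(1) = 0` and stays in the band `[-1, min(2w-1, 1)]` for all `w ≥ 0`
and all `λ, T, n_A ≥ 0`. -/
theorem stmt_13 (Δ : ℝ → ℝ) (hΔ : ∀ w, 0 ≤ Δ w) (hΔ1 : Δ 1 = 0)
    (lam T nA : ℝ) (hlam : 0 ≤ lam) (hT : 0 ≤ T) (hnA : 0 ≤ nA) :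
    (((1 - lam * T * nA * Δ 1 ^ 2) * 1 - 1) / ((1 + lam * T * nA * Δ 1 ^ 2) * 1 + 1)
        = 0)
    ∧ ∀ w : ℝ, 0 ≤ w →
        -1 ≤ ((1 - lam * T * nA * Δ w ^ 2) * w - 1)
              / ((1 + lam * T * nA * Δ w ^ 2) * w + 1)
        ∧ ((1 - lam * T * nA * Δ w ^ 2) * w - 1)
              / ((1 + lam * T * nA * Δ w ^ 2) * w + 1) ≤ min (2 * w - 1) 1 := by
  constructor
  · simp [hΔ1]
  · intro w hw
    have hc : 0 ≤ lam * T * nA * Δ w ^ 2 := by positivity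
    set c := lam * T * nA * Δ w ^ 2 with hcdef
    have hD : 0 < (1 + c) * w + 1 := by nlinarith
    refine ⟨?_, le_min ?_ ?_⟩
    · rw [le_div_iff₀ hD]; nlinarith
    · rw [div_le_iff₀ hD]; nlinarith [mul_nonneg hc (sq_nonneg w), sq_nonneg w]
    · rw [div_le_iff₀ hD]; nlinarith [mul_nonneg hc (sq_nonneg w), sq_nonneg w]
end
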